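/- Let 𝔤 = sp_{2ℓ}(ℂ) realized as :xy: elements in the Weyl algebra, and let Φ : U(𝔤) → W(A) be the algebra homomorphism extending the Lie algebra embedding x ↦ x. Then Φ(Δ_m) = 0 for every 2 ≤ m ≤ ℓ, where Δ_m = det((X_{ε_i+ε_j})_{1≤i,j≤m}) ∈ U(𝔤), since Φ(X_{ε_i+ε_j}) = a_i a_j and det((a_i a_j)) = 0. -/
import Mathlib


/-- Leibniz determinant for a (possibly noncommutative) ring, with factors taken
in the row order `0, 1, …, m-1`. -/
noncomputable def ncdet {R : Type*} [Ring R] {m : ℕ} (M : Fin m → Fin m → R) : R :=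
  ∑ σ : Equiv.Perm (Fin m),
    ((Equiv.Perm.sign σ : ℤ) • ((List.finRange m).map (fun i => M i (σ i))).prod)

/-- Mapping `ncdet` through a ring hom. -/
theorem ncdet_map {R S F : Type*} [Ring R] [Ring S] [FunLike F R S] [RingHomClass F R S]
    (f : F) {m : ℕ}
    (M : Fin m → Fin m → R) : f (ncdet M) = ncdet (fun p q => f (M p q)) := by
  unfold ncdet
  rw [map_sum]
  refine Finset.sum_congr rfl fun σ _ => ?_
  rw [map_zsmul, map_list_prod f, List.map_map]
  rfl

/-- In a commutative ring, `ncdet` is the determinant of the transpose. -/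
theorem ncdet_eq_det {R : Type*} [CommRing R] {m : ℕ} (M : Matrix (Fin m) (Fin m) R) :
    ncdet (fun p q => M p q) = M.transpose.det := by
  rw [Matrix.det_apply']
  unfold ncdet
  refine Finset.sum_congr rfl fun σ _ => ?_
  rw [← Fin.prod_univ_def, zsmul_eq_mul]
  simp [Matrix.transpose_apply]

/-- In a commutative ring, the Leibniz determinant of a rank-one symmetric
matrix `(b p * b q)` vanishes when `m ≥ 2`. -/
theorem ncdet_rank_one {R : Type*} [CommRing R] {m : ℕ} (hm : 2 ≤ m) (b : Fin m → R) :
    ncdet (fun p q => b p * b q) = 0 := by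
  have h : ncdet (fun p q => b p * b q)
      = (Matrix.of fun p q : Fin m => b p * b q).transpose.det := ncdet_eq_det _
  rw [h, Matrix.det_transpose]
  have hfact : (Matrix.of fun p q : Fin m => b p * b q)
      = Matrix.diagonal b * Matrix.of (fun _ q : Fin m => b q) := by
    ext p q
    simp [Matrix.mul_apply, Matrix.diagonal, Finset.sum_ite_eq]
  rw [hfact, Matrix.det_mul]
  have h0 : (Matrix.of (fun _ q : Fin m => b q)).det = 0 := by
    refine Matrix.det_zero_of_row_eq (i := ⟨0, by omega⟩) (j := ⟨1, by omega⟩) ?_ rfl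
    intro h
    exact absurd (congrArg Fin.val h) (by simp)
  rw [h0, mul_zero]

/-- If `Φ : U → W` is a ℂ-algebra homomorphism from an algebra containing the
(symmetric, pairwise commuting) elements `X i j = X_{ε_i+ε_j}` to the Weyl algebra,
with `Φ (X i j) = a i * a j`, then `Φ (Δ_m) = 0` for every `2 ≤ m ≤ ℓ`. -/
theorem stmt_18 {ℓ m : ℕ} (hm : 2 ≤ m) (hmℓ : m ≤ ℓ)
    (U W : Type*) [Ring U] [Algebra ℂ U] [Ring W] [Algebra ℂ W]
    (a astar : Fin ℓ → W)
    (haa : ∀ i j, a i * a j = a j * a i)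
    (hss : ∀ i j, astar i * astar j = astar j * astar i)
    (has : ∀ i j, a i * astar j - astar j * a i = if i = j then 1 else 0)
    (X : Fin ℓ → Fin ℓ → U)
    (hsymm : ∀ i j, X i j = X j i)
    (hcomm : ∀ i j k l, X i j * X k l = X k l * X i j)
    (Φ : U →ₐ[ℂ] W)
    (hΦ : ∀ i j, Φ (X i j) = a i * a j) :
    Φ (ncdet (fun p q : Fin m => X (Fin.castLE hmℓ p) (Fin.castLE hmℓ q))) = 0 := by
  classical
  have hcc : ∀ x ∈ Set.range (fun p : Fin m => a (Fin.castLE hmℓ p)),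
      ∀ y ∈ Set.range (fun p : Fin m => a (Fin.castLE hmℓ p)), x * y = y * x := by
    rintro _ ⟨p, rfl⟩ _ ⟨q, rfl⟩
    exact haa _ _
  set S := Algebra.adjoin ℂ (Set.range (fun p : Fin m => a (Fin.castLE hmℓ p))) with hS
  have b : Fin m → S := fun p => ⟨a (Fin.castLE hmℓ p), Algebra.subset_adjoin ⟨p, rfl⟩⟩
  have key : ncdet (fun p q : Fin m =>
      (⟨a (Fin.castLE hmℓ p), Algebra.subset_adjoin ⟨p, rfl⟩⟩ : S) *
      (⟨a (Fin.castLE hmℓ q), Algebra.subset_adjoin ⟨q, rfl⟩⟩ : S)) = 0 :=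
    @ncdet_rank_one _ (Algebra.adjoinCommRingOfComm ℂ hcc) m hm _
  have h1 : Φ (ncdet (fun p q : Fin m => X (Fin.castLE hmℓ p) (Fin.castLE hmℓ q)))
      = ncdet (fun p q : Fin m => a (Fin.castLE hmℓ p) * a (Fin.castLE hmℓ q)) := by
    rw [ncdet_map Φ]
    simp only [hΦ]
  have h2 : (S.val : S →ₐ[ℂ] W) (ncdet (fun p q : Fin m =>
      (⟨a (Fin.castLE hmℓ p), Algebra.subset_adjoin ⟨p, rfl⟩⟩ : S) *
      (⟨a (Fin.castLE hmℓ q), Algebra.subset_adjoin ⟨q, rfl⟩⟩ : S)))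
      = ncdet (fun p q : Fin m => a (Fin.castLE hmℓ p) * a (Fin.castLE hmℓ q)) := by
    rw [ncdet_map (S.val : S →ₐ[ℂ] W)]
    congr 1
  rw [h1, ← h2, key, map_zero]
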